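/- arXiv:math/0107064 — 6 statements merged into one kernel-verified Lean document; each statement's English description precedes it below -/
import Mathlib

section
/- Let N ⊆ M ⊆ R be a tower of unital k-algebras (k a field). Suppose E : M → N is an N-bimodule map with dual bases x₁,…,xₙ, y₁,…,yₙ ∈ M (i.e., ∑ᵢ E(m xᵢ)yᵢ = m = ∑ᵢ xᵢ E(yᵢ m) for all m ∈ M), and F : R → M is an M-bimodule map with dual bases z₁,…,z_p, w₁,…,w_p ∈ R (i.e., ∑ⱼ F(r zⱼ)wⱼ = r = ∑ⱼ zⱼ F(wⱼ r) for all r ∈ R). Then the composite E ∘ F : R → N is an N-bimodule map with dual bases {zⱼxᵢ}, {yᵢwⱼ}: for all r ∈ R, ∑ᵢ,ⱼ E(F(r zⱼ xᵢ)) yᵢ wⱼ = r = ∑ᵢ,ⱼ zⱼ xᵢ E(F(yᵢ wⱼ r)). -/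
/-!
Both dual-basis identities collapse in two stages: since `F` is right (resp. left) `M`-linear and
the `xᵢ`, `yᵢ` lie in `M`, the inner sum over `i` is the dual-basis identity of `E` applied to the
element `F (r zⱼ)` (resp. `F (wⱼ r)`) of `M`, and the remaining sum over `j` is that of `F`.
-/

namespace FrobeniusExtension

variable {R : Type*} [Semiring R] {M : Set R} {F : R → R}

theorem map_mul_right_of_bimodule (hM : 1 ∈ M)
    (hF : ∀ m ∈ M, ∀ m' ∈ M, ∀ r, F (m * r * m') = m * F r * m') (r : R) {m : R} (hm : m ∈ M) :
    F (r * m) = F r * m := by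
  simpa only [one_mul] using hF 1 hM m hm r

theorem map_mul_left_of_bimodule (hM : 1 ∈ M)
    (hF : ∀ m ∈ M, ∀ m' ∈ M, ∀ r, F (m * r * m') = m * F r * m') (r : R) {m : R} (hm : m ∈ M) :
    F (m * r) = m * F r := by
  simpa only [mul_one] using hF m hm 1 hM r

theorem comp_bimodule {N : Set R} {E : R → R} (hNM : N ⊆ M) (hF_mem : ∀ r, F r ∈ M)
    (hE : ∀ n ∈ N, ∀ n' ∈ N, ∀ m ∈ M, E (n * m * n') = n * E m * n')
    (hF : ∀ m ∈ M, ∀ m' ∈ M, ∀ r, F (m * r * m') = m * F r * m') :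
    ∀ n ∈ N, ∀ n' ∈ N, ∀ r, E (F (n * r * n')) = n * E (F r) * n' := fun n hn n' hn' r => by
  rw [hF n (hNM hn) n' (hNM hn') r, hE n hn n' hn' (F r) (hF_mem r)]

variable {ι κ : Type*} [Fintype ι] [Fintype κ] {E : R → R} {x y : ι → R} {z w : κ → R}

theorem comp_dual_basis_left (hM : 1 ∈ M) (hF_mem : ∀ r, F r ∈ M)
    (hF : ∀ m ∈ M, ∀ m' ∈ M, ∀ r, F (m * r * m') = m * F r * m') (hx : ∀ i, x i ∈ M)
    (hE₁ : ∀ m ∈ M, ∑ i, E (m * x i) * y i = m) (hF₁ : ∀ r, ∑ j, F (r * z j) * w j = r)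
    (r : R) : ∑ j, ∑ i, E (F (r * (z j * x i))) * (y i * w j) = r := by
  have inner (j : κ) : ∑ i, E (F (r * (z j * x i))) * (y i * w j) = F (r * z j) * w j := by
    conv_rhs => rw [← hE₁ _ (hF_mem (r * z j)), Finset.sum_mul]
    refine Finset.sum_congr rfl fun i _ => ?_
    rw [← map_mul_right_of_bimodule hM hF _ (hx i), mul_assoc, mul_assoc]
  simp only [inner, hF₁]

theorem comp_dual_basis_right (hM : 1 ∈ M) (hF_mem : ∀ r, F r ∈ M)
    (hF : ∀ m ∈ M, ∀ m' ∈ M, ∀ r, F (m * r * m') = m * F r * m') (hy : ∀ i, y i ∈ M)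
    (hE₂ : ∀ m ∈ M, ∑ i, x i * E (y i * m) = m) (hF₂ : ∀ r, ∑ j, z j * F (w j * r) = r)
    (r : R) : ∑ j, ∑ i, (z j * x i) * E (F ((y i * w j) * r)) = r := by
  have inner (j : κ) : ∑ i, (z j * x i) * E (F ((y i * w j) * r)) = z j * F (w j * r) := by
    conv_rhs => rw [← hE₂ _ (hF_mem (w j * r)), Finset.mul_sum]
    refine Finset.sum_congr rfl fun i _ => ?_
    rw [← map_mul_left_of_bimodule hM hF _ (hy i), mul_assoc, mul_assoc]
  simp only [inner, hF₂]

end FrobeniusExtension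

open FrobeniusExtension in
theorem frobenius_transitivity_general
    (k : Type*) [Field k] (R : Type*) [Ring R] [Algebra k R]
    (N M : Subalgebra k R) (hNM : N ≤ M)
    (E F : R →ₗ[k] R)
    (hE_bimod : ∀ n ∈ N, ∀ n' ∈ N, ∀ m ∈ M, E (n * m * n') = n * E m * n')
    (n p : ℕ) (x y : Fin n → R) (z w : Fin p → R)
    (hx : ∀ i, x i ∈ M) (hy : ∀ i, y i ∈ M)
    (hE₁ : ∀ m ∈ M, ∑ i, E (m * x i) * y i = m)
    (hE₂ : ∀ m ∈ M, ∑ i, x i * E (y i * m) = m)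
    (hF_mem : ∀ r : R, F r ∈ M)
    (hF_bimod : ∀ m ∈ M, ∀ m' ∈ M, ∀ r : R, F (m * r * m') = m * F r * m')
    (hF₁ : ∀ r : R, ∑ j, F (r * z j) * w j = r)
    (hF₂ : ∀ r : R, ∑ j, z j * F (w j * r) = r) :
    (∀ n₁ ∈ N, ∀ n₂ ∈ N, ∀ r : R, E (F (n₁ * r * n₂)) = n₁ * E (F r) * n₂) ∧
    (∀ r : R, ∑ j, ∑ i, E (F (r * (z j * x i))) * (y i * w j) = r) ∧
    (∀ r : R, ∑ j, ∑ i, (z j * x i) * E (F ((y i * w j) * r)) = r) :=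
  ⟨comp_bimodule (M := (M : Set R)) hNM hF_mem hE_bimod hF_bimod,
    comp_dual_basis_left M.one_mem hF_mem hF_bimod hx hE₁ hF₁,
    comp_dual_basis_right M.one_mem hF_mem hF_bimod hy hE₂ hF₂⟩

/-- **Transitivity of Frobenius extensions.** If `E : M → N` is a Frobenius homomorphism
with dual bases `{xᵢ}, {yᵢ}` and `F : R → M` is a Frobenius homomorphism with dual bases
`{zⱼ}, {wⱼ}`, then `E ∘ F : R → N` is a Frobenius homomorphism with dual bases
`{zⱼxᵢ}, {yᵢwⱼ}`. Here `N ⊆ M ⊆ R` is a tower of unital `k`-algebras, realized as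
subalgebras `N ≤ M` of the ambient algebra `R`. -/
theorem frobenius_transitivity
    (k : Type*) [Field k] (R : Type*) [Ring R] [Algebra k R]
    (N M : Subalgebra k R) (hNM : N ≤ M)
    (E F : R →ₗ[k] R)
    (hE_mem : ∀ m ∈ M, E m ∈ N)
    (hE_bimod : ∀ n ∈ N, ∀ n' ∈ N, ∀ m ∈ M, E (n * m * n') = n * E m * n')
    (n p : ℕ) (x y : Fin n → R) (z w : Fin p → R)
    (hx : ∀ i, x i ∈ M) (hy : ∀ i, y i ∈ M)
    (hE₁ : ∀ m ∈ M, ∑ i, E (m * x i) * y i = m)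
    (hE₂ : ∀ m ∈ M, ∑ i, x i * E (y i * m) = m)
    (hF_mem : ∀ r : R, F r ∈ M)
    (hF_bimod : ∀ m ∈ M, ∀ m' ∈ M, ∀ r : R, F (m * r * m') = m * F r * m')
    (hF₁ : ∀ r : R, ∑ j, F (r * z j) * w j = r)
    (hF₂ : ∀ r : R, ∑ j, z j * F (w j * r) = r) :
    (∀ n₁ ∈ N, ∀ n₂ ∈ N, ∀ r : R, E (F (n₁ * r * n₂)) = n₁ * E (F r) * n₂) ∧
    (∀ r : R, ∑ j, ∑ i, E (F (r * (z j * x i))) * (y i * w j) = r) ∧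
    (∀ r : R, ∑ j, ∑ i, (z j * x i) * E (F ((y i * w j) * r)) = r) :=
  frobenius_transitivity_general k R N M hNM E F hE_bimod n p x y z w hx hy hE₁ hE₂ hF_mem hF_bimod
    hF₁ hF₂
end

section
/- Let N ⊆ M be unital k-algebras (k a field) and let E : M → N be an N-bimodule map with dual bases x₁,…,xₙ, y₁,…,yₙ ∈ M (∑ᵢ E(m xᵢ)yᵢ = m = ∑ᵢ xᵢ E(yᵢ m) for all m ∈ M). Then there exists a unique map q : C_M(N) → C_M(N) on the centralizer C_M(N) = {c ∈ M : cn = nc for all n ∈ N} satisfying E(q(c)m) = E(mc) for all m ∈ M and c ∈ C_M(N); moreover q is a k-algebra automorphism of C_M(N) (the Nakayama automorphism of E). -/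
/-!
The dual-basis identities make `E` nondegenerate on both sides: `a = ∑ E(a xᵢ) yᵢ` is determined
by `m ↦ E(a m)`, and `a = ∑ xᵢ E(yᵢ a)` by `m ↦ E(m a)`. For `c` in the centralizer,
`q(c) = ∑ E(xᵢ c) yᵢ` satisfies `E(q(c) m) = E(m c)`, because `c` commutes with the values of `E`.
Uniqueness, multiplicativity and membership in the centralizer all follow from nondegeneracy,
and `∑ xᵢ E(c yᵢ)` is a preimage of `c`, so `q` is an automorphism.
-/

open Finset

section Semiring

variable {M : Type*} [Semiring M] {n : ℕ} {x y : Fin n → M}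

theorem eq_of_forall_map_mul_left_eq {E : M → M} (hE₁ : ∀ m, ∑ i, E (m * x i) * y i = m)
    {a b : M} (h : ∀ m, E (a * m) = E (b * m)) : a = b := by
  rw [← hE₁ a, ← hE₁ b]
  simp only [h]

theorem eq_of_forall_map_mul_right_eq {E : M → M} (hE₂ : ∀ m, ∑ i, x i * E (y i * m) = m)
    {a b : M} (h : ∀ m, E (m * a) = E (m * b)) : a = b := by
  rw [← hE₂ a, ← hE₂ b]
  simp only [h]

theorem mem_centralizer_of_forall_map_mul_left_eq {E : M → M} {S : Set M}
    (hE₁ : ∀ m, ∑ i, E (m * x i) * y i = m) (hEl : ∀ g ∈ S, ∀ m, E (g * m) = g * E m)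
    {a c : M} (h : ∀ m, E (a * m) = E (m * c)) : a ∈ S.centralizer := by
  intro g hg
  refine eq_of_forall_map_mul_left_eq hE₁ fun m => ?_
  calc E (g * a * m) = g * E (m * c) := by rw [mul_assoc, hEl g hg, h]
    _ = E (a * (g * m)) := by rw [h, mul_assoc, hEl g hg]
    _ = E (a * g * m) := by rw [mul_assoc]

theorem mem_centralizer_of_forall_map_mul_right_eq {E : M → M} {S : Set M}
    (hE₂ : ∀ m, ∑ i, x i * E (y i * m) = m) (hEr : ∀ g ∈ S, ∀ m, E (m * g) = E m * g)
    {a c : M} (h : ∀ m, E (c * m) = E (m * a)) : a ∈ S.centralizer := by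
  intro g hg
  refine eq_of_forall_map_mul_right_eq hE₂ fun m => ?_
  calc E (m * (g * a)) = E (c * (m * g)) := by rw [h, mul_assoc]
    _ = E (m * a) * g := by rw [← mul_assoc, hEr g hg, h]
    _ = E (m * (a * g)) := by rw [← hEr g hg, mul_assoc]

end Semiring

section Algebra

variable {k M : Type*} [CommSemiring k] [Semiring M] [Algebra k M] {E : M →ₗ[k] M} {S : Set M}
  {n : ℕ} {x y : Fin n → M}

variable (E x y) in
def nakayamaMap : M →ₗ[k] M :=
  ∑ i, LinearMap.mulRight k (y i) ∘ₗ E ∘ₗ LinearMap.mulLeft k (x i)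

theorem nakayamaMap_apply (c : M) : nakayamaMap E x y c = ∑ i, E (x i * c) * y i := by
  simp [nakayamaMap]

theorem map_nakayamaMap_mul (hE_mem : ∀ m, E m ∈ S) (hEl : ∀ g ∈ S, ∀ m, E (g * m) = g * E m)
    (hEr : ∀ g ∈ S, ∀ m, E (m * g) = E m * g) (hE₂ : ∀ m, ∑ i, x i * E (y i * m) = m)
    {c : M} (hc : c ∈ S.centralizer) (m : M) :
    E (nakayamaMap E x y c * m) = E (m * c) := by
  calc E (nakayamaMap E x y c * m) = ∑ i, E (x i * c) * E (y i * m) := by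
        simp only [nakayamaMap_apply, sum_mul, map_sum, mul_assoc, hEl _ (hE_mem _)]
    _ = E (m * c) := by
        conv_rhs => rw [← hE₂ m]
        simp only [sum_mul, map_sum]
        refine sum_congr rfl fun i _ => ?_
        rw [mul_assoc, hc _ (hE_mem _), ← mul_assoc, hEr _ (hE_mem _)]

variable (E x y) in
def nakayamaInvMap : M →ₗ[k] M :=
  ∑ i, LinearMap.mulLeft k (x i) ∘ₗ E ∘ₗ LinearMap.mulRight k (y i)

theorem nakayamaInvMap_apply (c : M) : nakayamaInvMap E x y c = ∑ i, x i * E (c * y i) := by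
  simp [nakayamaInvMap]

theorem map_mul_nakayamaInvMap (hE_mem : ∀ m, E m ∈ S) (hEl : ∀ g ∈ S, ∀ m, E (g * m) = g * E m)
    (hEr : ∀ g ∈ S, ∀ m, E (m * g) = E m * g) (hE₁ : ∀ m, ∑ i, E (m * x i) * y i = m)
    {c : M} (hc : c ∈ S.centralizer) (m : M) :
    E (m * nakayamaInvMap E x y c) = E (c * m) := by
  calc E (m * nakayamaInvMap E x y c) = ∑ i, E (m * x i) * E (c * y i) := by
        simp only [nakayamaInvMap_apply, mul_sum, map_sum, ← mul_assoc, hEr _ (hE_mem _)]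
    _ = E (c * m) := by
        conv_rhs => rw [← hE₁ m]
        simp only [mul_sum, map_sum]
        refine sum_congr rfl fun i _ => ?_
        rw [← mul_assoc, ← hc _ (hE_mem _), mul_assoc, hEl _ (hE_mem _)]

theorem nakayamaMap_eq_of_forall_map_mul_eq (hE_mem : ∀ m, E m ∈ S)
    (hEl : ∀ g ∈ S, ∀ m, E (g * m) = g * E m) (hEr : ∀ g ∈ S, ∀ m, E (m * g) = E m * g)
    (hE₁ : ∀ m, ∑ i, E (m * x i) * y i = m) (hE₂ : ∀ m, ∑ i, x i * E (y i * m) = m)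
    {a c : M} (hc : c ∈ S.centralizer) (h : ∀ m, E (a * m) = E (m * c)) :
    nakayamaMap E x y c = a :=
  eq_of_forall_map_mul_left_eq hE₁ fun m =>
    (map_nakayamaMap_mul hE_mem hEl hEr hE₂ hc m).trans (h m).symm

variable (hE_mem : ∀ m, E m ∈ S)
    (hEl : ∀ g ∈ S, ∀ m, E (g * m) = g * E m) (hEr : ∀ g ∈ S, ∀ m, E (m * g) = E m * g)
    (hE₁ : ∀ m, ∑ i, E (m * x i) * y i = m) (hE₂ : ∀ m, ∑ i, x i * E (y i * m) = m)

def nakayamaAlgHom : Subalgebra.centralizer k S →ₐ[k] Subalgebra.centralizer k S where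
  toFun c := ⟨nakayamaMap E x y c, mem_centralizer_of_forall_map_mul_left_eq hE₁ hEl
    (map_nakayamaMap_mul hE_mem hEl hEr hE₂ c.2)⟩
  map_one' := Subtype.ext <| nakayamaMap_eq_of_forall_map_mul_eq hE_mem hEl hEr hE₁ hE₂
    Set.one_mem_centralizer fun m => by rw [OneMemClass.coe_one, one_mul, mul_one]
  map_mul' a b := Subtype.ext <| nakayamaMap_eq_of_forall_map_mul_eq hE_mem hEl hEr hE₁ hE₂
    (a * b).2 fun m => by
      have hν (c : Subalgebra.centralizer k S) (m : M) :=
        map_nakayamaMap_mul (x := x) (y := y) hE_mem hEl hEr hE₂ c.2 m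
      calc E (nakayamaMap E x y a * nakayamaMap E x y b * m)
          = E (nakayamaMap E x y b * (m * a)) := by rw [mul_assoc, hν a, mul_assoc]
        _ = E (m * (a * b)) := by rw [hν b, mul_assoc]
  map_zero' := Subtype.ext (map_zero _)
  map_add' a b := Subtype.ext (map_add _ _ _)
  commutes' r := Subtype.ext <| nakayamaMap_eq_of_forall_map_mul_eq hE_mem hEl hEr hE₁ hE₂
    (algebraMap k (Subalgebra.centralizer k S) r).2 fun m => by
      rw [Subalgebra.coe_algebraMap, Algebra.commutes]

theorem map_nakayamaAlgHom_mul (c : Subalgebra.centralizer k S) (m : M) :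
    E (nakayamaAlgHom hE_mem hEl hEr hE₁ hE₂ c * m) = E (m * c) :=
  map_nakayamaMap_mul hE_mem hEl hEr hE₂ c.2 m

theorem nakayamaAlgHom_bijective :
    Function.Bijective (nakayamaAlgHom hE_mem hEl hEr hE₁ hE₂) := by
  have hν := map_nakayamaAlgHom_mul hE_mem hEl hEr hE₁ hE₂
  refine ⟨fun a b hab => Subtype.ext <| eq_of_forall_map_mul_right_eq hE₂ fun m => ?_,
    fun c => ?_⟩
  · rw [← hν a, ← hν b, hab]
  · have hpre := map_mul_nakayamaInvMap (x := x) (y := y) hE_mem hEl hEr hE₁ c.2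
    have hmem := mem_centralizer_of_forall_map_mul_right_eq hE₂ hEr fun m => (hpre m).symm
    exact ⟨⟨_, hmem⟩, Subtype.ext <|
      nakayamaMap_eq_of_forall_map_mul_eq hE_mem hEl hEr hE₁ hE₂ hmem fun m => (hpre m).symm⟩

end Algebra

/-- **Existence and uniqueness of the Nakayama automorphism.** If `E : M → N` is a
Frobenius homomorphism (an `N`-bimodule map with dual bases `{xᵢ}, {yᵢ}`), then there
is a unique map `q` on the centralizer `C_M(N)` with `E(q(c)·m) = E(m·c)` for all
`m ∈ M`, `c ∈ C_M(N)`; moreover any such map is (induced by) a `k`-algebra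
automorphism of `C_M(N)`. -/
theorem nakayama_automorphism
    (k : Type*) [Field k] (M : Type*) [Ring M] [Algebra k M]
    (N : Subalgebra k M)
    (E : M →ₗ[k] M)
    (hE_mem : ∀ m : M, E m ∈ N)
    (hE_bimod : ∀ n ∈ N, ∀ n' ∈ N, ∀ m : M, E (n * m * n') = n * E m * n')
    (n : ℕ) (x y : Fin n → M)
    (hE₁ : ∀ m : M, ∑ i, E (m * x i) * y i = m)
    (hE₂ : ∀ m : M, ∑ i, x i * E (y i * m) = m) :
    (∃! q : ↥(Subalgebra.centralizer k (N : Set M)) → ↥(Subalgebra.centralizer k (N : Set M)),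
      ∀ c : ↥(Subalgebra.centralizer k (N : Set M)), ∀ m : M,
        E ((q c : M) * m) = E (m * (c : M))) ∧
    (∀ q : ↥(Subalgebra.centralizer k (N : Set M)) → ↥(Subalgebra.centralizer k (N : Set M)),
      (∀ c : ↥(Subalgebra.centralizer k (N : Set M)), ∀ m : M,
        E ((q c : M) * m) = E (m * (c : M))) →
      ∃ q' : ↥(Subalgebra.centralizer k (N : Set M)) ≃ₐ[k]
          ↥(Subalgebra.centralizer k (N : Set M)),
        ∀ c, q' c = q c) := by
  have hEl : ∀ g ∈ (N : Set M), ∀ m, E (g * m) = g * E m := fun g hg m => by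
    simpa using hE_bimod g hg 1 N.one_mem m
  have hEr : ∀ g ∈ (N : Set M), ∀ m, E (m * g) = E m * g := fun g hg m => by
    simpa using hE_bimod 1 N.one_mem g hg m
  set ν := nakayamaAlgHom hE_mem hEl hEr hE₁ hE₂
  have hν := map_nakayamaAlgHom_mul hE_mem hEl hEr hE₁ hE₂
  have hν_unique (q : Subalgebra.centralizer k (N : Set M) → Subalgebra.centralizer k (N : Set M))
      (hq : ∀ c m, E (q c * m) = E (m * c)) : q = ν :=
    funext fun c => Subtype.ext <|
      (nakayamaMap_eq_of_forall_map_mul_eq hE_mem hEl hEr hE₁ hE₂ c.2 (hq c)).symm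
  refine ⟨⟨ν, hν, hν_unique⟩, fun q hq => ⟨AlgEquiv.ofBijective ν ?_, fun c => ?_⟩⟩
  · exact nakayamaAlgHom_bijective hE_mem hEl hEr hE₁ hE₂
  · rw [hν_unique q hq, AlgEquiv.ofBijective_apply]
end

section
/- (Braid-like relations, concrete form.) Let k be a field, N ⊆ M unital k-algebras, E : M → N an N-bimodule map with E(1) = 1 and dual bases x₁,…,xₙ, y₁,…,yₙ ∈ M, and ∑ᵢ xᵢyᵢ = λ⁻¹·1 for nonzero λ ∈ k. Let M₁ := End(M_N) with the right M-module structure f · m := f ∘ ℓ_m, let M₂ be the k-algebra of right M-module endomorphisms of M₁, let L : M₁ → M₂ be given by left composition L_w(f) = w ∘ f, put e₁ := E ∈ M₁ and define e₂ ∈ M₂ by e₂(f) := ℓ_{Φ(f)}, where Φ(f) := λ ∑ᵢ f(xᵢ)yᵢ. Then e₂ is a well-defined right M-module endomorphism of M₁, e₂ ∘ e₂ = e₂, and the braid-like relations hold in M₂: L_{e₁} ∘ e₂ ∘ L_{e₁} = λ · L_{e₁} and e₂ ∘ L_{e₁} ∘ e₂ = λ · e₂. -/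
/-!
Everything reduces to two expansions coming from the dual bases: a right `N`-linear `f`
satisfies `f a = ∑ᵢ f(xᵢ) E(yᵢ a)`, and `∑ᵢ E(m xᵢ) yᵢ = m`. The first makes
`Φ(f ∘ ℓ_m) = Φ(f) m` (right `M`-linearity of `e₂`) and `E(Φ(E ∘ f) a) = λ E(f a)`; the second
gives `Φ(E ∘ ℓ_w) = λ w`. Idempotence is `Φ(ℓ_w) = λ w ∑ᵢ xᵢ yᵢ = w`, which is where the index
condition `∑ᵢ xᵢ yᵢ = λ⁻¹` enters.
-/

open LinearMap

section DualBasis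

variable {k M : Type*} [CommSemiring k] [Semiring M] [Algebra k M]
  (N : Subalgebra k M) (E : M →ₗ[k] M) {n : ℕ} (x y : Fin n → M)

def IsRightLinearOver (f : M →ₗ[k] M) : Prop :=
  ∀ a : M, ∀ n' ∈ N, f (a * n') = f a * n'

def dualSum (f : M →ₗ[k] M) : M :=
  ∑ i, f (x i) * y i

variable {N E x y}

theorem dualSum_mulLeft (w : M) :
    dualSum x y (mulLeft k w) = w * ∑ i, x i * y i := by
  simp only [dualSum, mulLeft_apply, Finset.mul_sum, mul_assoc]

theorem IsRightLinearOver.apply_eq_sum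
    (hE_mem : ∀ m : M, E m ∈ N) (hE₂ : ∀ m : M, ∑ i, x i * E (y i * m) = m)
    {f : M →ₗ[k] M} (hf : IsRightLinearOver N f) (a : M) :
    f a = ∑ i, f (x i) * E (y i * a) := by
  conv_lhs => rw [← hE₂ a, map_sum]
  exact Finset.sum_congr rfl fun i _ => hf _ _ (hE_mem _)

theorem IsRightLinearOver.dualSum_comp_mulLeft
    (hE_mem : ∀ m : M, E m ∈ N)
    (hE₁ : ∀ m : M, ∑ i, E (m * x i) * y i = m) (hE₂ : ∀ m : M, ∑ i, x i * E (y i * m) = m)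
    {f : M →ₗ[k] M} (hf : IsRightLinearOver N f) (m : M) :
    dualSum x y (f ∘ₗ mulLeft k m) = dualSum x y f * m :=
  calc ∑ i, f (m * x i) * y i
      = ∑ i, ∑ j, f (x j) * E (y j * (m * x i)) * y i := by
        simp only [hf.apply_eq_sum hE_mem hE₂ (m * x _), Finset.sum_mul]
    _ = ∑ j, f (x j) * ∑ i, E (y j * (m * x i)) * y i := by
        rw [Finset.sum_comm]
        simp only [Finset.mul_sum, mul_assoc]
    _ = ∑ j, f (x j) * y j * m := by
        refine Finset.sum_congr rfl fun j _ => ?_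
        simp_rw [← mul_assoc (y j) m, hE₁, mul_assoc]
    _ = dualSum x y f * m := (Finset.sum_mul ..).symm

theorem map_dualSum_comp_mul
    (hE_mem : ∀ m : M, E m ∈ N) (hE₂ : ∀ m : M, ∑ i, x i * E (y i * m) = m)
    (hE_left : ∀ n₀ ∈ N, ∀ m : M, E (n₀ * m) = n₀ * E m) (hE_right : IsRightLinearOver N E)
    {f : M →ₗ[k] M} (hf : IsRightLinearOver N f) (a : M) :
    E (dualSum x y (E ∘ₗ f) * a) = E (f a) := by
  rw [hf.apply_eq_sum hE_mem hE₂ a, dualSum, Finset.sum_mul, map_sum, map_sum]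
  refine Finset.sum_congr rfl fun i _ => ?_
  rw [comp_apply, mul_assoc, hE_left _ (hE_mem _), hE_right _ _ (hE_mem _)]

end DualBasis

theorem braid_like_relations_general
    (k : Type*) [Field k] (M : Type*) [Ring M] [Algebra k M]
    (N : Subalgebra k M)
    (E : M →ₗ[k] M)
    (hE_mem : ∀ m : M, E m ∈ N)
    (hE_bimod : ∀ n ∈ N, ∀ n' ∈ N, ∀ m : M, E (n * m * n') = n * E m * n')
    (n : ℕ) (x y : Fin n → M)
    (hE₁ : ∀ m : M, ∑ i, E (m * x i) * y i = m)
    (hE₂ : ∀ m : M, ∑ i, x i * E (y i * m) = m)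
    (lam : k) (hlam : lam ≠ 0)
    (hindex : ∑ i, x i * y i = lam⁻¹ • (1 : M))
    (Φ : (M →ₗ[k] M) → M) (hΦ : ∀ f, Φ f = lam • ∑ i, f (x i) * y i)
    (e₂ : (M →ₗ[k] M) → (M →ₗ[k] M)) (he₂ : ∀ f, e₂ f = LinearMap.mulLeft k (Φ f)) :
    (∀ f : M →ₗ[k] M, (∀ a : M, ∀ n' ∈ N, f (a * n') = f a * n') →
      ∀ a : M, ∀ n' ∈ N, (e₂ f) (a * n') = (e₂ f) a * n') ∧
    (∀ f : M →ₗ[k] M, (∀ a : M, ∀ n' ∈ N, f (a * n') = f a * n') →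
      ∀ m : M, e₂ (f ∘ₗ LinearMap.mulLeft k m) = e₂ f ∘ₗ LinearMap.mulLeft k m) ∧
    (∀ f : M →ₗ[k] M, (∀ a : M, ∀ n' ∈ N, f (a * n') = f a * n') →
      e₂ (e₂ f) = e₂ f) ∧
    (∀ f : M →ₗ[k] M, (∀ a : M, ∀ n' ∈ N, f (a * n') = f a * n') →
      E ∘ₗ e₂ (E ∘ₗ f) = lam • (E ∘ₗ f)) ∧
    (∀ f : M →ₗ[k] M, (∀ a : M, ∀ n' ∈ N, f (a * n') = f a * n') →
      e₂ (E ∘ₗ e₂ f) = lam • e₂ f) := by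
  have he₂ f : e₂ f = mulLeft k (lam • dualSum x y f) := by rw [he₂, hΦ, dualSum]
  have hE_left : ∀ n₀ ∈ N, ∀ m : M, E (n₀ * m) = n₀ * E m := fun n₀ hn₀ m => by
    simpa using hE_bimod n₀ hn₀ 1 N.one_mem m
  have hE_right : IsRightLinearOver N E := fun m n' hn' => by
    simpa using hE_bimod 1 N.one_mem n' hn' m
  have hΦ_mulLeft (w : M) : lam • dualSum x y (mulLeft k w) = w := by
    rw [dualSum_mulLeft, hindex, mul_smul_comm, mul_one, smul_smul, mul_inv_cancel₀ hlam,
      one_smul]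
  refine ⟨fun f _ a n' _ => ?_, fun f (hf : IsRightLinearOver N f) m => ?_, fun f _ => ?_,
    fun f (hf : IsRightLinearOver N f) => ?_, fun f _ => ?_⟩
  · simp only [he₂, mulLeft_apply, mul_assoc]
  · ext a
    simp [he₂, hf.dualSum_comp_mulLeft hE_mem hE₁ hE₂ m, mul_assoc]
  · rw [he₂ (e₂ f), he₂ f, hΦ_mulLeft]
  · ext a
    simp only [comp_apply, LinearMap.smul_apply, he₂, mulLeft_apply, smul_mul_assoc, map_smul]
    rw [map_dualSum_comp_mul hE_mem hE₂ hE_left hE_right hf]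
  · have hE_dualSum : dualSum x y (E ∘ₗ mulLeft k (lam • dualSum x y f)) = lam • dualSum x y f :=
      hE₁ _
    rw [he₂ (E ∘ₗ _), he₂ f, hE_dualSum]
    ext a
    simp

/-- **Braid-like relations, concrete form.** With `M₁ = End(M_N)` (modeled as the
right-`N`-linear `k`-endomorphisms of `M`), `e₁ := E`, `Φ(f) := λ ∑ᵢ f(xᵢ)yᵢ` and
`e₂(f) := ℓ_{Φ(f)}`, the map `e₂` preserves right-`N`-linearity, is right
`M`-linear (for the action `f · m = f ∘ ℓ_m`), is idempotent on `M₁`, and satisfies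
the braid-like relations `L_{e₁} ∘ e₂ ∘ L_{e₁} = λ·L_{e₁}` and
`e₂ ∘ L_{e₁} ∘ e₂ = λ·e₂` on `M₁`, where `L_{e₁}(f) = E ∘ f`. -/
theorem braid_like_relations
    (k : Type*) [Field k] (M : Type*) [Ring M] [Algebra k M]
    (N : Subalgebra k M)
    (E : M →ₗ[k] M)
    (hE_mem : ∀ m : M, E m ∈ N)
    (hE_bimod : ∀ n ∈ N, ∀ n' ∈ N, ∀ m : M, E (n * m * n') = n * E m * n')
    (hE_one : E 1 = 1)
    (n : ℕ) (x y : Fin n → M)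
    (hE₁ : ∀ m : M, ∑ i, E (m * x i) * y i = m)
    (hE₂ : ∀ m : M, ∑ i, x i * E (y i * m) = m)
    (lam : k) (hlam : lam ≠ 0)
    (hindex : ∑ i, x i * y i = lam⁻¹ • (1 : M))
    (Φ : (M →ₗ[k] M) → M) (hΦ : ∀ f, Φ f = lam • ∑ i, f (x i) * y i)
    (e₂ : (M →ₗ[k] M) → (M →ₗ[k] M)) (he₂ : ∀ f, e₂ f = LinearMap.mulLeft k (Φ f)) :
    (∀ f : M →ₗ[k] M, (∀ a : M, ∀ n' ∈ N, f (a * n') = f a * n') →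
      ∀ a : M, ∀ n' ∈ N, (e₂ f) (a * n') = (e₂ f) a * n') ∧
    (∀ f : M →ₗ[k] M, (∀ a : M, ∀ n' ∈ N, f (a * n') = f a * n') →
      ∀ m : M, e₂ (f ∘ₗ LinearMap.mulLeft k m) = e₂ f ∘ₗ LinearMap.mulLeft k m) ∧
    (∀ f : M →ₗ[k] M, (∀ a : M, ∀ n' ∈ N, f (a * n') = f a * n') →
      e₂ (e₂ f) = e₂ f) ∧
    (∀ f : M →ₗ[k] M, (∀ a : M, ∀ n' ∈ N, f (a * n') = f a * n') →
      E ∘ₗ e₂ (E ∘ₗ f) = lam • (E ∘ₗ f)) ∧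
    (∀ f : M →ₗ[k] M, (∀ a : M, ∀ n' ∈ N, f (a * n') = f a * n') →
      e₂ (E ∘ₗ e₂ f) = lam • e₂ f) :=
  braid_like_relations_general k M N E hE_mem hE_bimod n x y hE₁ hE₂ lam hlam hindex Φ hΦ e₂ he₂
end

section
/- Let k be a field, N ⊆ M ⊆ M₁ unital k-algebras, and E_M : M₁ → M an M-bimodule map admitting dual bases (there exist p₁,…,p_t, q₁,…,q_t ∈ M₁ with ∑ⱼ E_M(x pⱼ)qⱼ = x = ∑ⱼ pⱼ E_M(qⱼ x) for all x ∈ M₁). If M₁ is free as a right M-module on a basis z₁,…,z_r contained in the centralizer C_{M₁}(N), then there exist w₁,…,w_r ∈ C_{M₁}(N) such that E_M(wᵢ zⱼ) = δᵢⱼ·1 for all i, j, and {zᵢ}, {wᵢ} are dual bases for E_M: ∑ᵢ E_M(x zᵢ)wᵢ = x = ∑ᵢ zᵢ E_M(wᵢ x) for all x ∈ M₁. -/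
/-!
Write `x = ∑ᵢ zᵢ cᵢ(x)` with coordinates `cᵢ(x) ∈ M` and put `wᵢ = ∑ⱼ cᵢ(pⱼ) qⱼ`. Expanding
each `pⱼ` in the identity `x = ∑ⱼ pⱼ E(qⱼ x)` gives `x = ∑ᵢ zᵢ E(wᵢ x)`, so `E(wᵢ x) = cᵢ(x)` by
uniqueness of coordinates; in particular `E(wᵢ zⱼ) = δᵢⱼ`. Since the `zᵢ` centralize `N`,
`cᵢ(n x) = n cᵢ(x)` for `n ∈ N`, hence `E(wᵢ n x) = E(n wᵢ x)` for all `x`, and the other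
dual-basis identity forces `wᵢ n = n wᵢ`.
-/

open Finset

section FreeCoordinates

variable {R A ι : Type*} [CommSemiring R] [Semiring A] [Algebra R A] [Fintype ι]
  {M : Subalgebra R A} {z : ι → A}

noncomputable def freeCoord (hfree : ∀ x : A, ∃! c : ι → M, x = ∑ i, z i * (c i : A))
    (x : A) (i : ι) : A :=
  ((hfree x).choose i : A)

theorem freeCoord_mem (hfree : ∀ x : A, ∃! c : ι → M, x = ∑ i, z i * (c i : A))
    (x : A) (i : ι) : freeCoord hfree x i ∈ M :=
  ((hfree x).choose i).2

theorem sum_mul_freeCoord (hfree : ∀ x : A, ∃! c : ι → M, x = ∑ i, z i * (c i : A))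
    (x : A) : ∑ i, z i * freeCoord hfree x i = x :=
  (hfree x).choose_spec.1.symm

theorem freeCoord_eq_of_sum_mul_eq
    (hfree : ∀ x : A, ∃! c : ι → M, x = ∑ i, z i * (c i : A))
    {x : A} {c : ι → A} (hc : ∀ i, c i ∈ M) (hx : ∑ i, z i * c i = x) :
    freeCoord hfree x = c := by
  funext i
  have hchoose := (hfree x).choose_spec.2 (fun i => ⟨c i, hc i⟩) hx.symm
  exact (congrArg Subtype.val (congrFun hchoose i)).symm

theorem freeCoord_self [DecidableEq ι]
    (hfree : ∀ x : A, ∃! c : ι → M, x = ∑ i, z i * (c i : A)) (j : ι) :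
    freeCoord hfree (z j) = fun i => if i = j then 1 else 0 := by
  refine freeCoord_eq_of_sum_mul_eq hfree (fun i => ?_) (by simp)
  split_ifs
  exacts [M.one_mem, M.zero_mem]

theorem freeCoord_mul_left (hfree : ∀ x : A, ∃! c : ι → M, x = ∑ i, z i * (c i : A))
    {n : A} (hnM : n ∈ M) (hnz : ∀ i, z i * n = n * z i) (x : A) (i : ι) :
    freeCoord hfree (n * x) i = n * freeCoord hfree x i := by
  refine congrFun (freeCoord_eq_of_sum_mul_eq hfree
    (fun i => M.mul_mem hnM (freeCoord_mem hfree x i)) ?_) i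
  calc ∑ i, z i * (n * freeCoord hfree x i)
      = n * ∑ i, z i * freeCoord hfree x i := by
        simp only [mul_sum, ← mul_assoc, hnz]
    _ = n * x := by rw [sum_mul_freeCoord]

end FreeCoordinates

theorem eq_of_forall_map_mul_eq {κ A : Type*} [Fintype κ] [NonUnitalNonAssocSemiring A]
    (E : A → A) {p q : κ → A} (hpq : ∀ x, ∑ j, E (x * p j) * q j = x)
    {a b : A} (hab : ∀ x, E (a * x) = E (b * x)) : a = b := by
  rw [← hpq a, ← hpq b]
  simp only [hab]

section FreeDualBasis

variable {R A ι κ : Type*} [CommSemiring R] [Semiring A] [Algebra R A] [Fintype ι] [Fintype κ]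
  {M : Subalgebra R A} {z : ι → A}

noncomputable def freeDualBasis (hfree : ∀ x : A, ∃! c : ι → M, x = ∑ i, z i * (c i : A))
    (p q : κ → A) (i : ι) : A :=
  ∑ j, freeCoord hfree (p j) i * q j

theorem map_freeDualBasis_mul (hfree : ∀ x : A, ∃! c : ι → M, x = ∑ i, z i * (c i : A))
    {E : A →ₗ[R] A} (hE_mem : ∀ x, E x ∈ M) (hE_left : ∀ m ∈ M, ∀ x, E (m * x) = m * E x)
    {p q : κ → A} (hpq : ∀ x, ∑ j, p j * E (q j * x) = x) (x : A) (i : ι) :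
    E (freeDualBasis hfree p q i * x) = freeCoord hfree x i := by
  have hE_w :
      E (freeDualBasis hfree p q i * x) = ∑ j, freeCoord hfree (p j) i * E (q j * x) := by
    simp only [freeDualBasis, sum_mul, map_sum, mul_assoc]
    exact sum_congr rfl fun j _ => hE_left _ (freeCoord_mem hfree _ _) _
  have hx : ∑ i, z i * ∑ j, freeCoord hfree (p j) i * E (q j * x) = x := by
    calc ∑ i, z i * ∑ j, freeCoord hfree (p j) i * E (q j * x)
        = ∑ j, (∑ i, z i * freeCoord hfree (p j) i) * E (q j * x) := by
          simp only [sum_mul, mul_sum, mul_assoc]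
          exact sum_comm
      _ = x := by simpa only [sum_mul_freeCoord] using hpq x
  rw [hE_w, freeCoord_eq_of_sum_mul_eq hfree (fun i => M.sum_mem fun j _ =>
    M.mul_mem (freeCoord_mem hfree _ _) (hE_mem _)) hx]

theorem sum_map_mul_mul_freeDualBasis
    (hfree : ∀ x : A, ∃! c : ι → M, x = ∑ i, z i * (c i : A))
    {E : A →ₗ[R] A} (hE_right : ∀ m ∈ M, ∀ x, E (x * m) = E x * m)
    {p q : κ → A} (hpq : ∀ x, ∑ j, E (x * p j) * q j = x) (x : A) :
    ∑ i, E (x * z i) * freeDualBasis hfree p q i = x := by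
  calc ∑ i, E (x * z i) * freeDualBasis hfree p q i
      = ∑ j, E (x * ∑ i, z i * freeCoord hfree (p j) i) * q j := by
        simp only [freeDualBasis, mul_sum, sum_mul, map_sum, ← mul_assoc,
          ← hE_right _ (freeCoord_mem hfree _ _)]
        exact sum_comm
    _ = x := by simpa only [sum_mul_freeCoord] using hpq x

theorem freeDualBasis_mul_comm (hfree : ∀ x : A, ∃! c : ι → M, x = ∑ i, z i * (c i : A))
    {E : A →ₗ[R] A} (hE_mem : ∀ x, E x ∈ M) (hE_left : ∀ m ∈ M, ∀ x, E (m * x) = m * E x)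
    {p q : κ → A} (hpq₁ : ∀ x, ∑ j, E (x * p j) * q j = x)
    (hpq₂ : ∀ x, ∑ j, p j * E (q j * x) = x)
    {n : A} (hnM : n ∈ M) (hnz : ∀ i, z i * n = n * z i) (i : ι) :
    freeDualBasis hfree p q i * n = n * freeDualBasis hfree p q i := by
  have hE_w := map_freeDualBasis_mul hfree hE_mem hE_left hpq₂
  refine eq_of_forall_map_mul_eq E hpq₁ fun x => ?_
  rw [mul_assoc, mul_assoc, hE_left n hnM, hE_w, hE_w, freeCoord_mul_left hfree hnM hnz]

end FreeDualBasis

/-- If `E_M : M₁ → M` is a Frobenius homomorphism and `M₁` is free as a right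
`M`-module on a basis `z₁, …, z_r` contained in the centralizer `C_{M₁}(N)`, then
there exist `w₁, …, w_r ∈ C_{M₁}(N)` with `E_M(wᵢ zⱼ) = δᵢⱼ·1`, such that
`{zᵢ}, {wᵢ}` are (orthogonal) dual bases for `E_M`. The tower `N ⊆ M ⊆ M₁` is
realized by subalgebras `N ≤ M` of the ambient algebra `M₁`. -/
theorem orthogonal_dual_bases_in_centralizer
    (k : Type*) [Field k] (M₁ : Type*) [Ring M₁] [Algebra k M₁]
    (N M : Subalgebra k M₁) (hNM : N ≤ M)
    (EM : M₁ →ₗ[k] M₁)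
    (hEM_mem : ∀ x : M₁, EM x ∈ M)
    (hEM_bimod : ∀ m ∈ M, ∀ m' ∈ M, ∀ x : M₁, EM (m * x * m') = m * EM x * m')
    (t : ℕ) (p q : Fin t → M₁)
    (hEM₁ : ∀ x : M₁, ∑ j, EM (x * p j) * q j = x)
    (hEM₂ : ∀ x : M₁, ∑ j, p j * EM (q j * x) = x)
    (r : ℕ) (z : Fin r → M₁)
    (hzN : ∀ i, ∀ n ∈ N, z i * n = n * z i)
    (hfree : ∀ x : M₁, ∃! c : Fin r → ↥M, x = ∑ i, z i * (c i : M₁)) :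
    ∃ w : Fin r → M₁,
      (∀ i, ∀ n ∈ N, w i * n = n * w i) ∧
      (∀ i j, EM (w i * z j) = if i = j then (1 : M₁) else 0) ∧
      (∀ x : M₁, ∑ i, EM (x * z i) * w i = x) ∧
      (∀ x : M₁, ∑ i, z i * EM (w i * x) = x) := by
  have hE_left : ∀ m ∈ M, ∀ x, EM (m * x) = m * EM x := fun m hm x => by
    simpa using hEM_bimod m hm 1 M.one_mem x
  have hE_right : ∀ m ∈ M, ∀ x, EM (x * m) = EM x * m := fun m hm x => by
    simpa using hEM_bimod 1 M.one_mem m hm x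
  have hE_w := map_freeDualBasis_mul hfree hEM_mem hE_left hEM₂
  refine ⟨freeDualBasis hfree p q, fun i n hn => ?_, fun i j => ?_,
    sum_map_mul_mul_freeDualBasis hfree hE_right hEM₁, fun x => ?_⟩
  · exact freeDualBasis_mul_comm hfree hEM_mem hE_left hEM₁ hEM₂ (hNM hn)
      (fun i => hzN i n hn) i
  · rw [hE_w, freeCoord_self]
  · simp only [hE_w, sum_mul_freeCoord]
end

section
/- In the depth-2 Jones tower setup, the centralizers A = C_{M₁}(N) and B = C_{M₂}(M) are finite-dimensional separable k-algebras. Explicitly: A and B are finite-dimensional over k, the restriction of E_M to A is a k-valued Frobenius homomorphism on A with dual bases {zᵢ}, {wᵢ}, λ ∑ᵢ zᵢ ⊗ wᵢ ∈ A ⊗_k A is a separability element for A (i.e., ∑ᵢ a zᵢ ⊗ wᵢ = ∑ᵢ zᵢ ⊗ wᵢ a in A ⊗_k A for all a ∈ A, and λ ∑ᵢ zᵢ wᵢ = 1), and likewise λ ∑ⱼ uⱼ ⊗ vⱼ ∈ B ⊗_k B is a separability element for B. -/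
open scoped TensorProduct

/-- The depth-2 Jones tower setup: a tower `N ⊆ M ⊆ M₁ ⊆ R` (with `R` playing the
role of `M₂`) of unital `k`-algebras, with conditional expectations, Jones idempotents,
braid-like relations and depth-2 orthogonal dual bases, as in the paper. -/
structure JonesTower (k : Type*) [Field k] (R : Type*) [Ring R] [Algebra k R] where
  N : Subalgebra k R
  M : Subalgebra k R
  M₁ : Subalgebra k R
  hNM : N ≤ M
  hMM₁ : M ≤ M₁
  lam : k
  hlam : lam ≠ 0
  E : R →ₗ[k] R
  EM : R →ₗ[k] R
  EM1 : R →ₗ[k] R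
  hE_mem : ∀ m ∈ M, E m ∈ N
  hEM_mem : ∀ x ∈ M₁, EM x ∈ M
  hEM1_mem : ∀ x : R, EM1 x ∈ M₁
  hE_one : E 1 = 1
  hEM_one : EM 1 = 1
  hEM1_one : EM1 1 = 1
  hE_bimod : ∀ n ∈ N, ∀ n' ∈ N, ∀ m ∈ M, E (n * m * n') = n * E m * n'
  hEM_bimod : ∀ m ∈ M, ∀ m' ∈ M, ∀ x ∈ M₁, EM (m * x * m') = m * EM x * m'
  hEM1_bimod : ∀ w ∈ M₁, ∀ w' ∈ M₁, ∀ x : R, EM1 (w * x * w') = w * EM1 x * w'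
  n₀ : ℕ
  xb : Fin n₀ → R
  yb : Fin n₀ → R
  hxb : ∀ i, xb i ∈ M
  hyb : ∀ i, yb i ∈ M
  hE_dual₁ : ∀ m ∈ M, ∑ i, E (m * xb i) * yb i = m
  hE_dual₂ : ∀ m ∈ M, ∑ i, xb i * E (yb i * m) = m
  hE_index : ∑ i, xb i * yb i = lam⁻¹ • (1 : R)
  hCMN : ∀ c ∈ M, (∀ n ∈ N, c * n = n * c) → ∃ μ : k, c = μ • (1 : R)
  hCM₁M : ∀ c ∈ M₁, (∀ m ∈ M, c * m = m * c) → ∃ μ : k, c = μ • (1 : R)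
  hCM₂M₁ : ∀ c : R, (∀ w ∈ M₁, c * w = w * c) → ∃ μ : k, c = μ • (1 : R)
  e₁ : R
  e₂ : R
  he₁ : e₁ ∈ M₁
  he₁N : ∀ n ∈ N, e₁ * n = n * e₁
  he₂M : ∀ m ∈ M, e₂ * m = m * e₂
  he₁me₁ : ∀ m ∈ M, e₁ * m * e₁ = E m * e₁
  he₂we₂ : ∀ w ∈ M₁, e₂ * w * e₂ = EM w * e₂
  hEMe₁ : EM e₁ = lam • (1 : R)
  hEM1e₂ : EM1 e₂ = lam • (1 : R)
  hspanM₁ : Subalgebra.toSubmodule M₁ =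
    Submodule.span k {x : R | ∃ m ∈ M, ∃ m' ∈ M, x = m * e₁ * m'}
  hspanM₂ : (⊤ : Submodule k R) =
    Submodule.span k {x : R | ∃ w ∈ M₁, ∃ w' ∈ M₁, x = w * e₂ * w'}
  hbraid₁ : e₁ * e₂ * e₁ = lam • e₁
  hbraid₂ : e₂ * e₁ * e₂ = lam • e₂
  r : ℕ
  zb : Fin r → R
  wb : Fin r → R
  hzbM₁ : ∀ i, zb i ∈ M₁
  hwbM₁ : ∀ i, wb i ∈ M₁
  hzbN : ∀ i, ∀ n ∈ N, zb i * n = n * zb i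
  hwbN : ∀ i, ∀ n ∈ N, wb i * n = n * wb i
  hzw_orth : ∀ i j, EM (wb i * zb j) = if i = j then (1 : R) else 0
  hzw_dual₁ : ∀ x ∈ M₁, ∑ i, EM (x * zb i) * wb i = x
  hzw_dual₂ : ∀ x ∈ M₁, ∑ i, zb i * EM (wb i * x) = x
  hzw_index : ∑ i, zb i * wb i = lam⁻¹ • (1 : R)
  s : ℕ
  ub : Fin s → R
  vb : Fin s → R
  hubM : ∀ i, ∀ m ∈ M, ub i * m = m * ub i
  hvbM : ∀ i, ∀ m ∈ M, vb i * m = m * vb i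
  huv_orth : ∀ i j, EM1 (vb i * ub j) = if i = j then (1 : R) else 0
  huv_dual₁ : ∀ x : R, ∑ i, EM1 (x * ub i) * vb i = x
  huv_dual₂ : ∀ x : R, ∑ i, ub i * EM1 (vb i * x) = x
  huv_index : ∑ i, ub i * vb i = lam⁻¹ • (1 : R)
  F : R →ₗ[k] k
  hF : ∀ c : R, (∀ n ∈ N, c * n = n * c) → algebraMap k R (F c) = EM (EM1 c)

variable {k : Type*} [Field k] {R : Type*} [Ring R] [Algebra k R]

/-- The second centralizer `A = C_{M₁}(N)`. -/
def JonesTower.A (T : JonesTower k R) : Subalgebra k R :=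
  T.M₁ ⊓ Subalgebra.centralizer k (T.N : Set R)

/-- The second centralizer `B = C_{M₂}(M)`. -/
def JonesTower.B (T : JonesTower k R) : Subalgebra k R :=
  Subalgebra.centralizer k (T.M : Set R)

/-- The big centralizer `C = C_{M₂}(N)`. -/
def JonesTower.C (T : JonesTower k R) : Subalgebra k R :=
  Subalgebra.centralizer k (T.N : Set R)

/-! Both centralizers are handled by one argument. If an expectation `E` takes scalar values on
a subalgebra `S` containing dual bases `zᵢ, wᵢ` for `E`, then every `x ∈ S` is a `k`-combination
`∑ᵢ zᵢ E(wᵢ x)` of the `zᵢ`, and writing `a zᵢ` and `wⱼ a` in the two bases produces the same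
matrix `E(wⱼ a zᵢ)` of scalars, which is exactly the Casimir identity. Scalar-valuedness comes from
the trivial relative commutants: `E` is a bimodule map, so it sends elements commuting with the
smaller algebra to elements of its target algebra commuting with it, i.e. to scalars. -/

section DualBasis

variable {K A ι : Type*} [Fintype ι] {E : A → A} {z w : ι → A}

theorem le_span_range_of_dual_basis [Field K] [Ring A] [Algebra K A] {S : Subalgebra K A}
    (hw : ∀ i, w i ∈ S) (hscalar : ∀ x ∈ S, ∃ μ : K, E x = μ • (1 : A))
    (hdual : ∀ x ∈ S, ∑ i, z i * E (w i * x) = x) :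
    Subalgebra.toSubmodule S ≤ Submodule.span K (Set.range z) := by
  intro x hx
  rw [← hdual x hx]
  refine Submodule.sum_mem _ fun i _ => ?_
  obtain ⟨μ, hμ⟩ := hscalar _ (mul_mem (hw i) hx)
  rw [hμ, mul_smul_comm, mul_one]
  exact Submodule.smul_mem _ _ (Submodule.subset_span ⟨i, rfl⟩)

theorem finiteDimensional_of_dual_basis [Field K] [Ring A] [Algebra K A] {S : Subalgebra K A}
    (hw : ∀ i, w i ∈ S) (hscalar : ∀ x ∈ S, ∃ μ : K, E x = μ • (1 : A))
    (hdual : ∀ x ∈ S, ∑ i, z i * E (w i * x) = x) :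
    FiniteDimensional K S :=
  have : FiniteDimensional K (Submodule.span K (Set.range z)) :=
    FiniteDimensional.span_of_finite K (Set.finite_range z)
  Submodule.finiteDimensional_of_le (le_span_range_of_dual_basis hw hscalar hdual)

theorem sum_mul_tmul_eq_sum_tmul_mul [CommSemiring K] [Semiring A] [Algebra K A]
    {S : Subalgebra K A} (hz : ∀ i, z i ∈ S) (hw : ∀ i, w i ∈ S)
    (hscalar : ∀ x ∈ S, ∃ μ : K, E x = μ • (1 : A))
    (hdual₁ : ∀ x ∈ S, ∑ i, E (x * z i) * w i = x)
    (hdual₂ : ∀ x ∈ S, ∑ i, z i * E (w i * x) = x) {a : A} (ha : a ∈ S) :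
    ∑ i, (a * z i) ⊗ₜ[K] w i = ∑ i, z i ⊗ₜ[K] (w i * a) := by
  choose μ hμ using fun j i => hscalar (w j * a * z i) (mul_mem (mul_mem (hw j) ha) (hz i))
  calc ∑ i, (a * z i) ⊗ₜ[K] w i
      = ∑ i, (∑ j, μ j i • z j) ⊗ₜ[K] w i := by
        refine Finset.sum_congr rfl fun i _ => ?_
        rw [← hdual₂ _ (mul_mem ha (hz i))]
        simp only [← mul_assoc, hμ, mul_smul_comm, mul_one]
    _ = ∑ j, z j ⊗ₜ[K] (∑ i, μ j i • w i) := by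
        simp only [TensorProduct.sum_tmul, TensorProduct.tmul_sum, TensorProduct.smul_tmul]
        exact Finset.sum_comm
    _ = ∑ j, z j ⊗ₜ[K] (w j * a) := by
        refine Finset.sum_congr rfl fun j _ => ?_
        rw [← hdual₁ _ (mul_mem (hw j) ha)]
        simp only [hμ, smul_mul_assoc, one_mul]

end DualBasis

namespace JonesTower

variable (T : JonesTower k R)

theorem mem_A_iff {a : R} : a ∈ T.A ↔ a ∈ T.M₁ ∧ ∀ n ∈ T.N, a * n = n * a := by
  simp only [JonesTower.A, Algebra.mem_inf, Subalgebra.mem_centralizer_iff, SetLike.mem_coe,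
    eq_comm (a := _ * a)]

theorem A_le_M₁ : T.A ≤ T.M₁ := inf_le_left

theorem mem_B_iff {b : R} : b ∈ T.B ↔ ∀ m ∈ T.M, b * m = m * b := by
  simp only [JonesTower.B, Subalgebra.mem_centralizer_iff, SetLike.mem_coe, eq_comm (a := _ * b)]

theorem zb_mem_A (i : Fin T.r) : T.zb i ∈ T.A := T.mem_A_iff.2 ⟨T.hzbM₁ i, T.hzbN i⟩

theorem wb_mem_A (i : Fin T.r) : T.wb i ∈ T.A := T.mem_A_iff.2 ⟨T.hwbM₁ i, T.hwbN i⟩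

theorem ub_mem_B (i : Fin T.s) : T.ub i ∈ T.B := T.mem_B_iff.2 (T.hubM i)

theorem vb_mem_B (i : Fin T.s) : T.vb i ∈ T.B := T.mem_B_iff.2 (T.hvbM i)

theorem EM_mul_comm {x m : R} (hx : x ∈ T.M₁) (hm : m ∈ T.M) (hxm : x * m = m * x) :
    T.EM x * m = m * T.EM x := by
  have hright := T.hEM_bimod 1 (one_mem _) m hm x hx
  have hleft := T.hEM_bimod m hm 1 (one_mem _) x hx
  simp only [one_mul, mul_one] at hright hleft
  rw [← hright, hxm, hleft]

theorem EM1_mul_comm {x w : R} (hw : w ∈ T.M₁) (hxw : x * w = w * x) :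
    T.EM1 x * w = w * T.EM1 x := by
  have hright := T.hEM1_bimod 1 (one_mem _) w hw x
  have hleft := T.hEM1_bimod w hw 1 (one_mem _) x
  simp only [one_mul, mul_one] at hright hleft
  rw [← hright, hxw, hleft]

theorem exists_EM_eq_smul_one {a : R} (ha : a ∈ T.A) : ∃ μ : k, T.EM a = μ • (1 : R) := by
  obtain ⟨haM₁, haN⟩ := T.mem_A_iff.1 ha
  exact T.hCMN _ (T.hEM_mem a haM₁) fun n hn => T.EM_mul_comm haM₁ (T.hNM hn) (haN n hn)

theorem exists_EM1_eq_smul_one {b : R} (hb : b ∈ T.B) : ∃ μ : k, T.EM1 b = μ • (1 : R) :=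
  T.hCM₁M _ (T.hEM1_mem b) fun m hm => T.EM1_mul_comm (T.hMM₁ hm) (T.mem_B_iff.1 hb m hm)

end JonesTower

theorem second_centralizers_separable_general (T : JonesTower k R) :
    FiniteDimensional k ↥T.A ∧ FiniteDimensional k ↥T.B ∧
    (∀ a ∈ T.A, ∃ μ : k, T.EM a = μ • (1 : R)) ∧
    (∀ a ∈ T.A, ∑ i, T.EM (a * T.zb i) * T.wb i = a ∧
      ∑ i, T.zb i * T.EM (T.wb i * a) = a) ∧
    (∀ a ∈ T.A, ∑ i, (a * T.zb i) ⊗ₜ[k] T.wb i = ∑ i, T.zb i ⊗ₜ[k] (T.wb i * a)) ∧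
    T.lam • ∑ i, T.zb i * T.wb i = (1 : R) ∧
    (∀ b ∈ T.B, ∃ μ : k, T.EM1 b = μ • (1 : R)) ∧
    (∀ b ∈ T.B, ∑ j, (b * T.ub j) ⊗ₜ[k] T.vb j = ∑ j, T.ub j ⊗ₜ[k] (T.vb j * b)) ∧
    T.lam • ∑ j, T.ub j * T.vb j = (1 : R) := by
  have hscalarA : ∀ a ∈ T.A, ∃ μ : k, T.EM a = μ • (1 : R) := fun a => T.exists_EM_eq_smul_one
  have hscalarB : ∀ b ∈ T.B, ∃ μ : k, T.EM1 b = μ • (1 : R) := fun b => T.exists_EM1_eq_smul_one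
  have hdualA₁ : ∀ a ∈ T.A, ∑ i, T.EM (a * T.zb i) * T.wb i = a :=
    fun a ha => T.hzw_dual₁ a (T.A_le_M₁ ha)
  have hdualA₂ : ∀ a ∈ T.A, ∑ i, T.zb i * T.EM (T.wb i * a) = a :=
    fun a ha => T.hzw_dual₂ a (T.A_le_M₁ ha)
  have hdualB₁ : ∀ b ∈ T.B, ∑ j, T.EM1 (b * T.ub j) * T.vb j = b := fun b _ => T.huv_dual₁ b
  have hdualB₂ : ∀ b ∈ T.B, ∑ j, T.ub j * T.EM1 (T.vb j * b) = b := fun b _ => T.huv_dual₂ b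
  exact ⟨finiteDimensional_of_dual_basis T.wb_mem_A hscalarA hdualA₂,
    finiteDimensional_of_dual_basis T.vb_mem_B hscalarB hdualB₂,
    hscalarA, fun a ha => ⟨hdualA₁ a ha, hdualA₂ a ha⟩,
    fun a => sum_mul_tmul_eq_sum_tmul_mul T.zb_mem_A T.wb_mem_A hscalarA hdualA₁ hdualA₂,
    by rw [T.hzw_index, smul_inv_smul₀ T.hlam],
    hscalarB,
    fun b => sum_mul_tmul_eq_sum_tmul_mul T.ub_mem_B T.vb_mem_B hscalarB hdualB₁ hdualB₂,
    by rw [T.huv_index, smul_inv_smul₀ T.hlam]⟩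

/-- `A = C_{M₁}(N)` and `B = C_{M₂}(M)` are finite-dimensional separable `k`-algebras:
`E_M` restricted to `A` is a `k`-valued Frobenius homomorphism with dual bases
`{zᵢ}, {wᵢ}`, `λ ∑ᵢ zᵢ ⊗ wᵢ` is a separability element for `A` (viewed inside
`R ⊗[k] R`, which contains `A ⊗[k] A`), and likewise `λ ∑ⱼ uⱼ ⊗ vⱼ` is a
separability element for `B`. -/
theorem second_centralizers_separable (T : JonesTower k R) [Nontrivial R] :
    FiniteDimensional k ↥T.A ∧ FiniteDimensional k ↥T.B ∧
    (∀ a ∈ T.A, ∃ μ : k, T.EM a = μ • (1 : R)) ∧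
    (∀ a ∈ T.A, ∑ i, T.EM (a * T.zb i) * T.wb i = a ∧
      ∑ i, T.zb i * T.EM (T.wb i * a) = a) ∧
    (∀ a ∈ T.A, ∑ i, (a * T.zb i) ⊗ₜ[k] T.wb i = ∑ i, T.zb i ⊗ₜ[k] (T.wb i * a)) ∧
    T.lam • ∑ i, T.zb i * T.wb i = (1 : R) ∧
    (∀ b ∈ T.B, ∃ μ : k, T.EM1 b = μ • (1 : R)) ∧
    (∀ b ∈ T.B, ∑ j, (b * T.ub j) ⊗ₜ[k] T.vb j = ∑ j, T.ub j ⊗ₜ[k] (T.vb j * b)) ∧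
    T.lam • ∑ j, T.ub j * T.vb j = (1 : R) :=
  second_centralizers_separable_general T
end

section
/- In the depth-2 Jones tower setup, the multiplication map M ⊗_k A → M₁, m ⊗ a ↦ ma, is a k-linear bijection (indeed an isomorphism of M-A-bimodules), and the multiplication map M₁ ⊗_k B → M₂, y ⊗ b ↦ yb, is a k-linear bijection (an isomorphism of M₁-B-bimodules). -/
open scoped TensorProduct

variable {k : Type*} [Field k] {R : Type*} [Ring R] [Algebra k R]

/-!
For the expectation `E_M` with dual basis `zᵢ, wᵢ ∈ A`, every `x ∈ M₁` expands as
`x = ∑ E_M(x zᵢ) wᵢ` with `E_M(x zᵢ) ∈ M`, so `M₁ = M · A`. For `a ∈ A` the coefficient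
`E_M(a zᵢ)` lies in `C_M(N) = k`, so `A` is the `k`-span of the `wᵢ`; since `E_M` is `M`-linear,
`x ↦ ∑ E_M(x zᵢ) ⊗ wᵢ` sends `m a` back to `m ⊗ a` and is a left inverse of multiplication.
The same argument one floor higher, with `u, v ∈ B` and `C_{M₁}(M) = k`, handles `M₁ ⊗ B → M₂`.
-/

/-- A quasi-basis `(z, w)` for `E` in Watatani's sense, restricted to `L`, whose coefficients
lie in `P` and are scalar on `Q`. -/
structure IsQuasiBasis {K S ι : Type*} [CommRing K] [Ring S] [Algebra K S] [Fintype ι]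
    (E : S →ₗ[K] S) (P Q L : Submodule K S) (z w : ι → S) : Prop where
  w_mem : ∀ i, w i ∈ Q
  apply_mul_mem : ∀ x ∈ L, ∀ i, E (x * z i) ∈ P
  sum_apply_mul : ∀ x ∈ L, ∑ i, E (x * z i) * w i = x
  le : Q ≤ L
  mul_le : P * Q ≤ L
  apply_mul_left : ∀ p ∈ P, ∀ q ∈ Q, ∀ i, E (p * (q * z i)) = p * E (q * z i)
  apply_mul_scalar : ∀ q ∈ Q, ∀ i, ∃ μ : K, E (q * z i) = μ • 1

namespace IsQuasiBasis

variable {K S ι : Type*} [CommRing K] [Ring S] [Algebra K S] [Fintype ι]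
  {E : S →ₗ[K] S} {P Q L : Submodule K S} {z w : ι → S} (h : IsQuasiBasis E P Q L z w)
include h

noncomputable def expansion : L →ₗ[K] P ⊗[K] Q :=
  ∑ i, (TensorProduct.mk K P Q).flip ⟨w i, h.w_mem i⟩ ∘ₗ
    LinearMap.codRestrict P (E ∘ₗ LinearMap.mulRight K (z i) ∘ₗ L.subtype)
      fun x => h.apply_mul_mem x x.2 i

theorem expansion_apply (x : L) :
    h.expansion x = ∑ i, (⟨E (x * z i), h.apply_mul_mem x x.2 i⟩ : P) ⊗ₜ[K]
      (⟨w i, h.w_mem i⟩ : Q) := by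
  simp only [expansion, LinearMap.sum_apply]
  rfl

theorem expansion_mul (p : P) (q : Q) :
    h.expansion ⟨p * q, h.mul_le (Submodule.mul_mem_mul p.2 q.2)⟩ = p ⊗ₜ[K] q := by
  choose μ hμ using h.apply_mul_scalar q q.2
  have hcoeff : ∀ i, (⟨E (p * q * z i), h.apply_mul_mem _ (h.mul_le
      (Submodule.mul_mem_mul p.2 q.2)) i⟩ : P) = μ i • p := fun i =>
    Subtype.ext <| by simp [mul_assoc, h.apply_mul_left p p.2 q q.2, hμ]
  have hq : ∑ i, μ i • (⟨w i, h.w_mem i⟩ : Q) = q :=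
    Subtype.ext <| by simpa [hμ] using h.sum_apply_mul q (h.le q.2)
  rw [expansion_apply]
  simp_rw [hcoeff, TensorProduct.smul_tmul, ← TensorProduct.tmul_sum, hq]

theorem mulMap_injective : Function.Injective (P.mulMap Q) := by
  let f : P ⊗[K] Q →ₗ[K] L := LinearMap.codRestrict L (P.mulMap Q) fun t =>
    h.mul_le (Submodule.mulMap_range P Q ▸ LinearMap.mem_range_self _ t)
  have hleft : h.expansion ∘ₗ f = LinearMap.id :=
    TensorProduct.ext' fun p q => h.expansion_mul p q
  intro x y hxy
  have hfxy : h.expansion (f x) = h.expansion (f y) := congrArg _ (Subtype.ext hxy)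
  simpa only [← LinearMap.comp_apply, hleft, LinearMap.id_apply] using hfxy

theorem range_mulMap : LinearMap.range (P.mulMap Q) = L := by
  rw [Submodule.mulMap_range]
  refine le_antisymm h.mul_le fun x hx => ?_
  rw [← h.sum_apply_mul x hx]
  exact Submodule.sum_mem _ fun i _ =>
    Submodule.mul_mem_mul (h.apply_mul_mem x hx i) (h.w_mem i)

end IsQuasiBasis

theorem LinearMap.commute_apply_of_commute {K S : Type*} [CommRing K] [Ring S] [Algebra K S]
    {E : S →ₗ[K] S} {n x : S} (hx : Commute n x) (hl : E (n * x) = n * E x)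
    (hr : E (x * n) = E x * n) : Commute n (E x) := by
  rw [Commute, SemiconjBy, ← hl, hx.eq, hr]

namespace JonesTower

variable (T : JonesTower k R)

theorem EM_mul_left {m x : R} (hm : m ∈ T.M) (hx : x ∈ T.M₁) : T.EM (m * x) = m * T.EM x := by
  simpa only [mul_one] using T.hEM_bimod m hm 1 T.M.one_mem x hx

theorem EM_mul_right {m x : R} (hm : m ∈ T.M) (hx : x ∈ T.M₁) : T.EM (x * m) = T.EM x * m := by
  simpa only [one_mul] using T.hEM_bimod 1 T.M.one_mem m hm x hx

theorem EM1_mul_left {w : R} (hw : w ∈ T.M₁) (x : R) : T.EM1 (w * x) = w * T.EM1 x := by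
  simpa only [mul_one] using T.hEM1_bimod w hw 1 T.M₁.one_mem x

theorem EM1_mul_right {w : R} (hw : w ∈ T.M₁) (x : R) : T.EM1 (x * w) = T.EM1 x * w := by
  simpa only [one_mul] using T.hEM1_bimod 1 T.M₁.one_mem w hw x

theorem isQuasiBasis_M_A :
    IsQuasiBasis T.EM (Subalgebra.toSubmodule T.M) (Subalgebra.toSubmodule T.A)
      (Subalgebra.toSubmodule T.M₁) T.zb T.wb where
  w_mem i := ⟨T.hwbM₁ i, Subalgebra.mem_centralizer_iff k |>.mpr fun n hn => (T.hwbN i n hn).symm⟩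
  apply_mul_mem x hx i := T.hEM_mem _ (T.M₁.mul_mem hx (T.hzbM₁ i))
  sum_apply_mul := T.hzw_dual₁
  le _ ha := ha.1
  mul_le := Submodule.mul_le.2 fun _ hm _ ha => T.M₁.mul_mem (T.hMM₁ hm) ha.1
  apply_mul_left p hp q hq i := T.EM_mul_left hp (T.M₁.mul_mem hq.1 (T.hzbM₁ i))
  apply_mul_scalar a ha i := by
    have hx : a * T.zb i ∈ T.M₁ := T.M₁.mul_mem ha.1 (T.hzbM₁ i)
    refine T.hCMN _ (T.hEM_mem _ hx) fun n hn => Eq.symm <|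
      LinearMap.commute_apply_of_commute ?_ (T.EM_mul_left (T.hNM hn) hx)
        (T.EM_mul_right (T.hNM hn) hx)
    exact .mul_right (Subalgebra.mem_centralizer_iff k |>.mp ha.2 n hn) (T.hzbN i n hn).symm

theorem isQuasiBasis_M₁_B :
    IsQuasiBasis T.EM1 (Subalgebra.toSubmodule T.M₁) (Subalgebra.toSubmodule T.B) ⊤ T.ub T.vb where
  w_mem i := Subalgebra.mem_centralizer_iff k |>.mpr fun m hm => (T.hvbM i m hm).symm
  apply_mul_mem _ _ _ := T.hEM1_mem _
  sum_apply_mul x _ := T.huv_dual₁ x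
  le := le_top
  mul_le := le_top
  apply_mul_left y hy _ _ _ := T.EM1_mul_left hy _
  apply_mul_scalar b hb i := by
    refine T.hCM₁M _ (T.hEM1_mem _) fun m hm => Eq.symm <|
      LinearMap.commute_apply_of_commute ?_ (T.EM1_mul_left (T.hMM₁ hm) _)
        (T.EM1_mul_right (T.hMM₁ hm) _)
    exact .mul_right (Subalgebra.mem_centralizer_iff k |>.mp hb m hm) (T.hubM i m hm).symm

end JonesTower

theorem tensor_product_decompositions_general (T : JonesTower k R) :
    (Function.Injective
        ((Subalgebra.toSubmodule T.M).mulMap (Subalgebra.toSubmodule T.A)) ∧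
      LinearMap.range
        ((Subalgebra.toSubmodule T.M).mulMap (Subalgebra.toSubmodule T.A)) =
        Subalgebra.toSubmodule T.M₁) ∧
    (Function.Injective
        ((Subalgebra.toSubmodule T.M₁).mulMap (Subalgebra.toSubmodule T.B)) ∧
      LinearMap.range
        ((Subalgebra.toSubmodule T.M₁).mulMap (Subalgebra.toSubmodule T.B)) = ⊤) :=
  ⟨⟨T.isQuasiBasis_M_A.mulMap_injective, T.isQuasiBasis_M_A.range_mulMap⟩,
    ⟨T.isQuasiBasis_M₁_B.mulMap_injective, T.isQuasiBasis_M₁_B.range_mulMap⟩⟩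

/-- The multiplication maps `M ⊗ₖ A → M₁` and `M₁ ⊗ₖ B → M₂` are `k`-linear
bijections (onto `M₁`, resp. onto all of `M₂ = R`). -/
theorem tensor_product_decompositions (T : JonesTower k R) [Nontrivial R] :
    (Function.Injective
        ((Subalgebra.toSubmodule T.M).mulMap (Subalgebra.toSubmodule T.A)) ∧
      LinearMap.range
        ((Subalgebra.toSubmodule T.M).mulMap (Subalgebra.toSubmodule T.A)) =
        Subalgebra.toSubmodule T.M₁) ∧
    (Function.Injective
        ((Subalgebra.toSubmodule T.M₁).mulMap (Subalgebra.toSubmodule T.B)) ∧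
      LinearMap.range
        ((Subalgebra.toSubmodule T.M₁).mulMap (Subalgebra.toSubmodule T.B)) = ⊤) :=
  tensor_product_decompositions_general T
end
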